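/- arXiv:0905.1277 — 3 statements merged into one kernel-verified Lean document; each statement's English description precedes it below -/
import Mathlib

section
/- Let (a_j)_{j∈ℤ} be a nonnegative summable sequence of reals. Suppose there exist M ∈ ℕ, M ≥ 1, and a sequence (ε_j)_{j∈ℤ} of nonnegative reals with ε_j → 0 as |j| → ∞, such that for all j ∈ ℤ, a_j ≤ ε_j · (a_{j-1} + a_{j-2} + ... + a_{j-M}). Then a_j = 0 for all j ∈ ℤ. -/
/-- If `(a_j)_{j∈ℤ}` is a nonnegative summable sequence and there exist
`M ≥ 1` and nonnegative `ε_j → 0` as `|j| → ∞` with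
`a_j ≤ ε_j · (a_{j-1} + ⋯ + a_{j-M})` for all `j`, then `a_j = 0` for all `j`. -/
theorem stmt0 (a : ℤ → ℝ) (ha : ∀ j, 0 ≤ a j) (hsum : Summable a)
    (M : ℕ) (hM : 1 ≤ M) (ε : ℤ → ℝ) (hε : ∀ j, 0 ≤ ε j)
    (hε0 : Filter.Tendsto ε Filter.cofinite (nhds 0))
    (hrec : ∀ j : ℤ, a j ≤ ε j * ∑ m ∈ Finset.Icc 1 M, a (j - m)) :
    ∀ j, a j = 0 := by
  set T := ∑' j, a j with hT
  have haT : ∀ j, a j ≤ T := fun j => Summable.le_tsum hsum j (fun i _ => ha i)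
  have hMpos : (0:ℝ) < (M:ℝ) := by exact_mod_cast hM
  set δ : ℝ := 1 / (2 * M) with hδdef
  have hδ : 0 < δ := by positivity
  have hfin : {j : ℤ | ¬ ε j < δ}.Finite := by
    have h1 : ∀ᶠ j in Filter.cofinite, ε j < δ := hε0.eventually (gt_mem_nhds hδ)
    exact Filter.eventually_cofinite.mp h1
  obtain ⟨b, hb⟩ := hfin.bddBelow
  have hsmall : ∀ j : ℤ, j < b → ε j < δ := by
    intro j hj
    by_contra h
    exact absurd (hb h) (not_le.mpr hj)
  set K : ℤ := b - 1 with hK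
  have hεK : ∀ j : ℤ, j ≤ K → ε j < δ := fun j hj => hsmall j (by omega)
  have hbdd : BddAbove (a '' {j : ℤ | j ≤ K}) := ⟨T, by rintro x ⟨j, _, rfl⟩; exact haT j⟩
  set S := sSup (a '' {j : ℤ | j ≤ K}) with hS
  have hne : (a '' {j : ℤ | j ≤ K}).Nonempty := ⟨a K, K, le_refl K, rfl⟩
  have hleS : ∀ j ≤ K, a j ≤ S := fun j hj => le_csSup hbdd ⟨j, hj, rfl⟩
  have hS0 : 0 ≤ S := le_trans (ha K) (hleS K le_rfl)
  have hShalf : S ≤ S / 2 := by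
    apply csSup_le hne
    rintro x ⟨j, hj, rfl⟩
    have hjK : j ≤ K := hj
    clear hj
    have hsumle : ∑ m ∈ Finset.Icc 1 M, a (j - m) ≤ (M:ℝ) * S := by
      calc ∑ m ∈ Finset.Icc 1 M, a (j - m) ≤ ∑ m ∈ Finset.Icc 1 M, S := by
            apply Finset.sum_le_sum
            intro m hm
            have h1 : 1 ≤ m := (Finset.mem_Icc.mp hm).1
            exact hleS _ (by omega)
        _ = (M:ℝ) * S := by
            rw [Finset.sum_const, Nat.card_Icc]
            simp [nsmul_eq_mul]
    have hsumnn : 0 ≤ ∑ m ∈ Finset.Icc 1 M, a (j - m) :=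
      Finset.sum_nonneg fun m _ => ha _
    calc a j ≤ ε j * ∑ m ∈ Finset.Icc 1 M, a (j - m) := hrec j
      _ ≤ δ * ((M:ℝ) * S) := mul_le_mul (hεK j hjK).le hsumle hsumnn hδ.le
      _ = S / 2 := by rw [hδdef]; field_simp
  have hSneg : S ≤ 0 := by linarith
  have hzero : ∀ j ≤ K, a j = 0 := fun j hj =>
    le_antisymm (le_trans (hleS j hj) hSneg) (ha j)
  have key : ∀ n : ℕ, ∀ j : ℤ, j ≤ K + n → a j = 0 := by
    intro n
    induction n with
    | zero => simpa using hzero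
    | succ n ih =>
      intro j hj
      rcases le_or_gt j (K + n) with h | h
      · exact ih j h
      · have hsum0 : ∑ m ∈ Finset.Icc 1 M, a (j - m) = 0 := by
          apply Finset.sum_eq_zero
          intro m hm
          have h1 : 1 ≤ m := (Finset.mem_Icc.mp hm).1
          exact ih _ (by omega)
        have h2 := hrec j
        rw [hsum0, mul_zero] at h2
        exact le_antisymm h2 (ha j)
  intro j
  rcases le_or_gt j K with h | h
  · exact hzero j h
  · exact key (j - K).toNat j (by omega)
end

section
/- Let (a_j)_{j∈ℤ} be a nonnegative summable sequence and M ≥ 1 an integer such that a_j ≤ (1/M) · ∑_{m=1}^{M} a_{j-m} for all j ≤ J'. Then, setting S = ∑_{j≤J'} a_j, one has S ≤ S - (1/M)·∑_{m=1}^{M} m·a_{J'-M+m}, and consequently a_{J'} = a_{J'-1} = ... = a_{J'-M+1} = 0. -/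
open Finset

private lemma tri_aux1 (M : ℕ) (c : ℕ → ℝ) :
    ∑ m ∈ Icc 1 M, ∑ n ∈ range m, c n = ∑ n ∈ range M, ((M : ℝ) - n) * c n := by
  induction M with
  | zero => simp
  | succ M ih =>
    rw [Finset.sum_Icc_succ_top (by omega), ih, sum_range_succ, sum_range_succ]
    have h : ∑ n ∈ range M, (((M : ℕ) + 1 : ℝ) - n) * c n
        = ∑ n ∈ range M, (((M : ℝ) - n) * c n + c n) := by
      apply sum_congr rfl; intro n _; ring
    push_cast
    rw [h, sum_add_distrib]
    ring

private lemma tri_aux2 (M : ℕ) (c : ℕ → ℝ) :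
    ∑ n ∈ range M, ((M : ℝ) - n) * c n = ∑ m ∈ Icc 1 M, (m : ℝ) * c (M - m) := by
  refine Finset.sum_nbij' (i := fun n => M - n) (j := fun m => M - m) ?_ ?_ ?_ ?_ ?_
  · intro n hn; simp only [mem_range] at hn; simp only [mem_Icc]; omega
  · intro m hm; simp only [mem_Icc] at hm; simp only [mem_range]; omega
  · intro n hn; simp only [mem_range] at hn; show M - (M - n) = n; omega
  · intro m hm; simp only [mem_Icc] at hm; show M - (M - m) = m; omega
  · intro n hn
    simp only [mem_range] at hn
    have h1 : M - (M - n) = n := by omega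
    have h2 : ((M - n : ℕ) : ℝ) = (M : ℝ) - n := by
      rw [Nat.cast_sub (by omega)]
    rw [h1, h2]

/-- Let `(a_j)_{j∈ℤ}` be nonnegative and summable, `M ≥ 1`, and suppose
`a_j ≤ (1/M) ∑_{m=1}^M a_{j-m}` for all `j ≤ J'`.  With `S = ∑_{j ≤ J'} a_j` one has
`S ≤ S - (1/M) ∑_{m=1}^M m · a_{J'-M+m}`, and consequently
`a_{J'} = a_{J'-1} = ⋯ = a_{J'-M+1} = 0`. -/
theorem stmt1 (a : ℤ → ℝ) (ha : ∀ j, 0 ≤ a j) (hsum : Summable a)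
    (M : ℕ) (hM : 1 ≤ M) (J' : ℤ)
    (hrec : ∀ j ≤ J', a j ≤ (1 / (M : ℝ)) * ∑ m ∈ Finset.Icc 1 M, a (j - m)) :
    (∑' j : {j : ℤ // j ≤ J'}, a j) ≤
        (∑' j : {j : ℤ // j ≤ J'}, a j)
          - (1 / (M : ℝ)) * ∑ m ∈ Finset.Icc 1 M, (m : ℝ) * a (J' - M + m) ∧
      ∀ k : ℕ, k < M → a (J' - k) = 0 := by
  set b : ℕ → ℝ := fun n => a (J' - n) with hb_def
  have hb : Summable b := by
    apply hsum.comp_injective (i := fun n : ℕ => J' - n)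
    intro n1 n2 h
    have h' : J' - (n1 : ℤ) = J' - (n2 : ℤ) := h
    omega
  have hbm : ∀ m : ℕ, Summable (fun n => b (n + m)) := by
    intro m
    apply hsum.comp_injective (i := fun n : ℕ => J' - (n + m : ℕ))
    intro n1 n2 h
    have h' : J' - ((n1 : ℤ) + m) = J' - ((n2 : ℤ) + m) := by push_cast at h ⊢; exact h
    omega
  have hS : (∑' j : {j : ℤ // j ≤ J'}, a j) = ∑' n : ℕ, b n :=
    (Equiv.tsum_eq
      ({ toFun := fun n => ⟨J' - n, by omega⟩
         invFun := fun j => (J' - j.1).toNat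
         left_inv := by intro n; simp
         right_inv := by
           intro j
           ext
           have := j.2
           simp [Int.toNat_of_nonneg (by omega : (0:ℤ) ≤ J' - j.1)] } :
        ℕ ≃ {j : ℤ // j ≤ J'}) (fun j => a j.1)).symm
  set S := ∑' n : ℕ, b n with hSdef
  have hf : ∀ n : ℕ, b n ≤ (1 / (M : ℝ)) * ∑ m ∈ Icc 1 M, b (n + m) := by
    intro n
    have := hrec (J' - n) (by omega)
    convert this using 2 with m
    apply sum_congr rfl
    intro m hm
    simp only [hb_def]
    congr 1
    push_cast
    ring
  have hsumf : Summable (fun n : ℕ => (1 / (M : ℝ)) * ∑ m ∈ Icc 1 M, b (n + m)) := by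
    apply Summable.mul_left
    exact summable_sum (fun m _ => hbm m)
  have hineq : S ≤ ∑' n : ℕ, (1 / (M : ℝ)) * ∑ m ∈ Icc 1 M, b (n + m) :=
    Summable.tsum_le_tsum hf hb hsumf
  have htail : ∀ m : ℕ, ∑' n : ℕ, b (n + m) = S - ∑ i ∈ range m, b i := by
    intro m
    have := Summable.sum_add_tsum_nat_add m hb
    linarith [this]
  have hcalc : ∑' n : ℕ, (1 / (M : ℝ)) * ∑ m ∈ Icc 1 M, b (n + m)
      = S - (1 / (M : ℝ)) * ∑ m ∈ Icc 1 M, (m : ℝ) * b (M - m) := by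
    rw [tsum_mul_left, Summable.tsum_finsetSum (fun m _ => hbm m)]
    have h1 : ∑ m ∈ Icc 1 M, ∑' n : ℕ, b (n + m)
        = ∑ m ∈ Icc 1 M, (S - ∑ i ∈ range m, b i) := by
      apply sum_congr rfl; intro m _; exact htail m
    rw [h1, sum_sub_distrib, sum_const, Nat.card_Icc]
    rw [tri_aux1 M b, tri_aux2 M b]
    have hM0 : (M : ℝ) ≠ 0 := by positivity
    simp only [Nat.add_sub_cancel, nsmul_eq_mul]
    field_simp
  have hba : ∀ m ∈ Icc 1 M, b (M - m) = a (J' - M + m) := by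
    intro m hm
    simp only [mem_Icc] at hm
    simp only [hb_def]
    congr 1
    push_cast [Nat.cast_sub hm.2]
    ring
  have hsum_eq : ∑ m ∈ Icc 1 M, (m : ℝ) * b (M - m)
      = ∑ m ∈ Icc 1 M, (m : ℝ) * a (J' - M + m) := by
    apply sum_congr rfl
    intro m hm
    rw [hba m hm]
  have hmain : S ≤ S - (1 / (M : ℝ)) * ∑ m ∈ Icc 1 M, (m : ℝ) * a (J' - M + m) := by
    rw [← hsum_eq]; rw [hcalc] at hineq; exact hineq
  refine ⟨by rw [hS]; exact hmain, ?_⟩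
  have hT0 : (1 / (M : ℝ)) * ∑ m ∈ Icc 1 M, (m : ℝ) * a (J' - M + m) ≤ 0 := by
    linarith [hmain]
  have hTnn : 0 ≤ ∑ m ∈ Icc 1 M, (m : ℝ) * a (J' - M + m) := by
    apply sum_nonneg
    intro m _
    exact mul_nonneg (by positivity) (ha _)
  have hMpos : (0 : ℝ) < 1 / (M : ℝ) := by
    have : (0:ℝ) < M := by exact_mod_cast hM
    positivity
  have hT : ∑ m ∈ Icc 1 M, (m : ℝ) * a (J' - M + m) = 0 := by
    nlinarith
  have hzero := (Finset.sum_eq_zero_iff_of_nonneg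
    (fun m _ => mul_nonneg (by positivity) (ha _))).mp hT
  intro k hk
  have hmem : M - k ∈ Icc 1 M := by simp only [mem_Icc]; omega
  have h0 := hzero (M - k) hmem
  have hmne : ((M - k : ℕ) : ℝ) ≠ 0 := by
    have : 1 ≤ M - k := by omega
    positivity
  have hz : a (J' - M + ((M - k : ℕ) : ℤ)) = 0 := by
    rcases mul_eq_zero.mp h0 with h | h
    · exact absurd h hmne
    · exact h
  have harg : J' - M + ((M - k : ℕ) : ℤ) = J' - k := by
    push_cast [Nat.cast_sub (by omega : k ≤ M)]
    ring
  rw [harg] at hz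
  exact hz
end

section
/- Let f and g be holomorphic functions on an open set containing the closure of a bounded domain U with boundary the simple closed curve Γ, and suppose |f(z) - g(z)| < |g(z)| for all z ∈ Γ. Then f and g have the same number of zeros (counted with multiplicity) in U. -/
open Complex Metric Set Filter Topology

noncomputable def AnalyticAt.order {f : ℂ → ℂ} {z : ℂ} (_ : AnalyticAt ℂ f z) : ℕ∞ :=
  analyticOrderAt f z

theorem AnalyticAt.order_eq_nat_iff {f : ℂ → ℂ} {z : ℂ} (hf : AnalyticAt ℂ f z) (n : ℕ) :
    hf.order = n ↔ ∃ (g : ℂ → ℂ), AnalyticAt ℂ g z ∧ g z ≠ 0 ∧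
      ∀ᶠ w in 𝓝 z, f w = (w - z) ^ n • g w :=
  hf.analyticOrderAt_eq_natCast

theorem AnalyticAt.order_eq_top_iff {f : ℂ → ℂ} {z : ℂ} (hf : AnalyticAt ℂ f z) :
    hf.order = ⊤ ↔ ∀ᶠ w in 𝓝 z, f w = 0 :=
  analyticOrderAt_eq_top

namespace Rouche

open scoped Classical in
noncomputable def aord (f : ℂ → ℂ) (z : ℂ) : ℕ :=
  if h : AnalyticAt ℂ f z then h.order.toNat else 0

lemma order_eq_zero_iff {f : ℂ → ℂ} {z : ℂ} (hf : AnalyticAt ℂ f z) :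
    hf.order = 0 ↔ f z ≠ 0 := by
  constructor
  · intro h
    obtain ⟨g, hg, hgz, hfg⟩ := (hf.order_eq_nat_iff 0).mp (by exact_mod_cast h)
    have := hfg.self_of_nhds
    simpa [this] using hgz
  · intro h
    rw [show ((0:ℕ∞)) = ((0:ℕ):ℕ∞) by rfl, hf.order_eq_nat_iff]
    exact ⟨f, hf, h, by simp⟩

lemma order_congr {f g : ℂ → ℂ} {z : ℂ} (hf : AnalyticAt ℂ f z) (hg : AnalyticAt ℂ g z)
    (h : f =ᶠ[𝓝 z] g) : hf.order = hg.order := by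
  rcases eq_or_ne hf.order ⊤ with ht | ht
  · rw [ht, eq_comm, hg.order_eq_top_iff]
    exact ((hf.order_eq_top_iff).mp ht).congr (h.mono fun w hw => by rw [hw])
  · obtain ⟨n, hn⟩ := (WithTop.ne_top_iff_exists).mp ht
    obtain ⟨q, hq, hqz, hfq⟩ := (hf.order_eq_nat_iff n).mp hn.symm
    rw [← hn]
    exact ((hg.order_eq_nat_iff n).mpr ⟨q, hq, hqz, h.symm.trans hfq⟩).symm

lemma aord_analytic {f : ℂ → ℂ} {z : ℂ} (hf : AnalyticAt ℂ f z) :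
    aord f z = hf.order.toNat := by
  rw [aord, dif_pos hf]

lemma aord_eq_of_order_eq_nat {f : ℂ → ℂ} {z : ℂ} (hf : AnalyticAt ℂ f z) {n : ℕ}
    (h : hf.order = n) : aord f z = n := by
  rw [aord_analytic hf, h]; rfl

lemma aord_eq_zero_of_ne {f : ℂ → ℂ} {z : ℂ} (hf : AnalyticAt ℂ f z) (h : f z ≠ 0) :
    aord f z = 0 :=
  aord_eq_of_order_eq_nat hf (by exact_mod_cast (order_eq_zero_iff hf).mpr h)

lemma order_pos_iff {f : ℂ → ℂ} {z : ℂ} (hf : AnalyticAt ℂ f z) (htop : hf.order ≠ ⊤)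
    (h : f z = 0) : aord f z ≠ 0 := by
  intro h0
  obtain ⟨n, hn⟩ := (WithTop.ne_top_iff_exists).mp htop
  have : n = 0 := by
    have := aord_eq_of_order_eq_nat hf hn.symm
    omega
  rw [this] at hn
  exact (order_eq_zero_iff hf).mp hn.symm h


lemma analyticAt_dslope_self {f : ℂ → ℂ} {a : ℂ} (hf : AnalyticAt ℂ f a) :
    AnalyticAt ℂ (dslope f a) a := by
  obtain ⟨p, hp⟩ := hf
  exact ⟨p.fslope, hp.has_fpower_series_dslope_fslope⟩

/-- order of `dslope f a` at a point `b ≠ a`, when `f a = 0`. -/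
lemma order_dslope_of_ne {f : ℂ → ℂ} {a b : ℂ} (hf : AnalyticAt ℂ f b) (hab : b ≠ a)
    (ha : f a = 0) (hd : AnalyticAt ℂ (dslope f a) b) : hd.order = hf.order := by
  have hev : dslope f a =ᶠ[𝓝 b] fun z => (z - a)⁻¹ * f z := by
    filter_upwards [isOpen_ne.mem_nhds hab] with w hw
    rw [dslope_of_ne f hw, slope_def_field, ha, sub_zero, div_eq_inv_mul]
  have hinv : AnalyticAt ℂ (fun z : ℂ => (z - a)⁻¹) b :=
    ((analyticAt_id.sub analyticAt_const).inv (sub_ne_zero.mpr hab))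
  have h2 : AnalyticAt ℂ (fun z => (z - a)⁻¹ * f z) b := hinv.mul hf
  rw [order_congr hd h2 hev]
  rcases eq_or_ne hf.order ⊤ with ht | ht
  · rw [ht, h2.order_eq_top_iff]
    exact ((hf.order_eq_top_iff).mp ht).mono fun w hw => by rw [hw, mul_zero]
  · obtain ⟨n, hn⟩ := (WithTop.ne_top_iff_exists).mp ht
    obtain ⟨q, hq, hqz, hfq⟩ := (hf.order_eq_nat_iff n).mp hn.symm
    rw [← hn]
    refine (h2.order_eq_nat_iff n).mpr ⟨fun z => (z - a)⁻¹ * q z, hinv.mul hq, ?_, ?_⟩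
    · simp only [ne_eq, mul_eq_zero, inv_eq_zero, sub_eq_zero, not_or]
      exact ⟨hab, hqz⟩
    · filter_upwards [hfq] with w hw
      simp only [smul_eq_mul] at hw ⊢
      rw [hw]; ring

/-- order of `dslope f a` at `a`, when `f` has order `k+1` at `a`. -/
lemma order_dslope_self {f : ℂ → ℂ} {a : ℂ} (hf : AnalyticAt ℂ f a) {k : ℕ}
    (hord : hf.order = (k + 1 : ℕ)) (hd : AnalyticAt ℂ (dslope f a) a) :
    hd.order = k := by
  obtain ⟨q, hq, hqz, hfq⟩ := (hf.order_eq_nat_iff (k+1)).mp hord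
  have hfa : f a = 0 := by
    have := hfq.self_of_nhds
    simpa using this
  have hder : HasDerivAt (fun z => (z - a) ^ (k+1) • q z)
      ((((k:ℂ)+1) * (a - a) ^ k) * q a + (a - a)^(k+1) * deriv q a) a := by
    have h1 : HasDerivAt (fun z : ℂ => (z - a) ^ (k+1)) (((k:ℂ)+1) * (a - a) ^ k) a := by
      simpa [Pi.pow_def] using ((hasDerivAt_id a).sub_const a).pow (k+1)
    simpa [smul_eq_mul, Pi.mul_def] using h1.mul hq.differentiableAt.hasDerivAt
  have hda : deriv f a = (0:ℂ) ^ k * q a := by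
    have heq : f =ᶠ[𝓝 a] fun z => (z - a) ^ (k+1) • q z := hfq
    rw [heq.deriv_eq, hder.deriv]
    cases k with
    | zero => simp
    | succ n => simp [zero_pow]
  refine (hd.order_eq_nat_iff k).mpr ⟨q, hq, hqz, ?_⟩
  filter_upwards [hfq] with w hw
  rcases eq_or_ne w a with rfl | hwa
  · rw [dslope_same, hda]
    simp [smul_eq_mul]
  · rw [dslope_of_ne f hwa, slope_def_field, hfa, sub_zero, hw, smul_eq_mul, smul_eq_mul,
      pow_succ, mul_right_comm, mul_div_assoc, div_self (sub_ne_zero.mpr hwa), mul_one]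

lemma circle_integral_add {f g : ℂ → ℂ} {c : ℂ} {R : ℝ} (hf : CircleIntegrable f c R)
    (hg : CircleIntegrable g c R) :
    (∮ z in C(c, R), (f z + g z)) = (∮ z in C(c, R), f z) + ∮ z in C(c, R), g z := by
  simp only [circleIntegral, smul_add, intervalIntegral.integral_add hf.out hg.out]

lemma ball_no_ev_zero {c : ℂ} {r R : ℝ} {F : ℂ → ℂ} (hr : 0 < r) (hrR : r < R)
    (hF : DifferentiableOn ℂ F (ball c R)) (hsph : ∀ z ∈ sphere c r, F z ≠ 0)
    {z : ℂ} (hz : z ∈ ball c R) (hev : ∀ᶠ w in 𝓝 z, F w = 0) : False := by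
  have hA : AnalyticOnNhd ℂ F (ball c R) := hF.analyticOnNhd isOpen_ball
  have hEq : EqOn F 0 (ball c R) :=
    hA.eqOn_zero_of_preconnected_of_eventuallyEq_zero (convex_ball c R).isPreconnected hz hev
  have hmem : (c + r : ℂ) ∈ sphere c r := by
    simp [Complex.dist_eq, abs_of_pos hr]
  exact hsph _ hmem (hEq (sphere_subset_closedBall.trans (closedBall_subset_ball hrR) hmem))

lemma order_ne_top_disk {c : ℂ} {r R : ℝ} {F : ℂ → ℂ} (hr : 0 < r) (hrR : r < R)
    (hF : DifferentiableOn ℂ F (ball c R)) (hsph : ∀ z ∈ sphere c r, F z ≠ 0)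
    {z : ℂ} (hz : z ∈ ball c R) (hA : AnalyticAt ℂ F z) : hA.order ≠ ⊤ := fun h =>
  ball_no_ev_zero hr hrR hF hsph hz (hA.order_eq_top_iff.mp h)

lemma zeros_finite_disk {c : ℂ} {r R : ℝ} {F : ℂ → ℂ} (hr : 0 < r) (hrR : r < R)
    (hF : DifferentiableOn ℂ F (ball c R)) (hsph : ∀ z ∈ sphere c r, F z ≠ 0) :
    {z | z ∈ ball c r ∧ F z = 0}.Finite := by
  rw [← Set.not_infinite]
  intro hinf
  obtain ⟨x, hxK, hacc⟩ := hinf.exists_accPt_of_subset_isCompact (isCompact_closedBall c r)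
    (fun z hz => ball_subset_closedBall hz.1)
  have hxB : x ∈ ball c R := lt_of_le_of_lt (mem_closedBall.mp hxK) hrR
  have hA : AnalyticAt ℂ F x := hF.analyticAt (isOpen_ball.mem_nhds hxB)
  have hfreq : ∃ᶠ w in 𝓝[≠] x, F w = 0 := by
    rw [frequently_nhdsWithin_iff]
    exact ((accPt_iff_frequently (x := x)).mp hacc).mono (fun y hy => ⟨hy.2.2, hy.1⟩)
  exact ball_no_ev_zero hr hrR hF hsph hxB
    (hA.frequently_zero_iff_eventually_zero.mp hfreq)

lemma sphere_subset_ballR {c : ℂ} {r R : ℝ} (hrR : r < R) : sphere c r ⊆ ball c R :=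
  sphere_subset_closedBall.trans (closedBall_subset_ball hrR)

lemma argument_principle {c : ℂ} {r R : ℝ} (hr : 0 < r) (hrR : r < R) :
    ∀ (n : ℕ) (F : ℂ → ℂ), DifferentiableOn ℂ F (ball c R) →
    (∀ z ∈ sphere c r, F z ≠ 0) →
    ∀ (Z : Finset ℂ), (∀ z, z ∈ Z ↔ z ∈ ball c r ∧ F z = 0) →
    (∑ z ∈ Z, aord F z) = n →
    (∮ z in C(c, r), deriv F z / F z) = 2 * Real.pi * Complex.I * n := by
  intro n
  induction n with
  | zero =>
    intro F hF hsph Z hZ hsum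
    have hZero : ∀ z ∈ closedBall c r, F z ≠ 0 := by
      intro z hz
      rcases (mem_closedBall.mp hz).lt_or_eq with hin | heq
      · intro h0
        have hzZ : z ∈ Z := (hZ z).mpr ⟨mem_ball.mpr hin, h0⟩
        have h1 : aord F z = 0 := by
          by_contra hne
          exact hne (Finset.sum_eq_zero_iff.mp hsum z hzZ)
        have hA : AnalyticAt ℂ F z :=
          hF.analyticAt (isOpen_ball.mem_nhds (ball_subset_ball hrR.le (mem_ball.mpr hin)))
        exact order_pos_iff hA
          (order_ne_top_disk hr hrR hF hsph (ball_subset_ball hrR.le (mem_ball.mpr hin)) hA) h0 h1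
      · exact hsph z (mem_sphere.mpr heq)
    have hAOn : AnalyticOnNhd ℂ F (ball c R) := hF.analyticOnNhd isOpen_ball
    have hderivC : ContinuousOn (deriv F) (ball c R) := (hAOn.deriv).continuousOn
    have hres : (∮ z in C(c, r), deriv F z / F z) = 0 := by
      refine circleIntegral_eq_zero_of_differentiable_on_off_countable hr.le
        (Set.countable_empty) ?_ ?_
      · refine ContinuousOn.div
          (hderivC.mono (closedBall_subset_ball hrR))
          (hF.continuousOn.mono (closedBall_subset_ball hrR)) hZero
      · intro z hz
        have hzR : z ∈ ball c R := ball_subset_ball hrR.le hz.1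
        have hA : AnalyticAt ℂ (deriv F) z := hAOn.deriv z hzR
        exact hA.differentiableAt.div (hF.differentiableAt (isOpen_ball.mem_nhds hzR))
          (hZero z (ball_subset_closedBall hz.1))
    rw [hres]
    simp
  | succ n IH =>
    classical
    intro F hF hsph Z hZ hsum
    have hball : ball c r ⊆ ball c R := ball_subset_ball hrR.le
    -- find a zero with positive order
    have hex : ∃ a ∈ Z, aord F a ≠ 0 := by
      by_contra hco
      push_neg at hco
      rw [Finset.sum_eq_zero hco] at hsum
      omega
    obtain ⟨a, haZ, hapos⟩ := hex
    obtain ⟨haball, haF⟩ := (hZ a).mp haZ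
    have haR : a ∈ ball c R := hball haball
    have hA : AnalyticAt ℂ F a := hF.analyticAt (isOpen_ball.mem_nhds haR)
    have hnet : hA.order ≠ ⊤ := order_ne_top_disk hr hrR hF hsph haR hA
    have horda : hA.order = (aord F a : ℕ) := by
      rw [aord_analytic hA, ENat.coe_toNat hnet]
    obtain ⟨k, hk⟩ : ∃ k, aord F a = k + 1 := ⟨aord F a - 1, by omega⟩
    set F₁ := dslope F a with hF₁def
    have h1 : ∀ z, F z = (z - a) * F₁ z := by
      intro z
      have := sub_smul_dslope F a z
      rw [smul_eq_mul, haF, sub_zero] at this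
      exact this.symm
    have hF₁ : DifferentiableOn ℂ F₁ (ball c R) := by
      intro x hx
      rcases eq_or_ne x a with rfl | hxa
      · exact (analyticAt_dslope_self hA).differentiableAt.differentiableWithinAt
      · exact ((differentiableAt_dslope_of_ne hxa).mpr
          (hF.differentiableAt (isOpen_ball.mem_nhds hx))).differentiableWithinAt
    have hsph₁ : ∀ z ∈ sphere c r, F₁ z ≠ 0 := by
      intro z hz h0
      exact hsph z hz (by rw [h1 z, h0, mul_zero])
    set Z₁ := Z.filter (fun z => F₁ z = 0) with hZ₁def
    have hZ₁ : ∀ z, z ∈ Z₁ ↔ z ∈ ball c r ∧ F₁ z = 0 := by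
      intro z
      rw [hZ₁def, Finset.mem_filter, hZ z]
      constructor
      · rintro ⟨⟨h1', _⟩, h2⟩; exact ⟨h1', h2⟩
      · rintro ⟨hb, h0⟩
        exact ⟨⟨hb, by rw [h1 z, h0, mul_zero]⟩, h0⟩
    have hanF₁ : ∀ z ∈ ball c R, AnalyticAt ℂ F₁ z := fun z hz =>
      hF₁.analyticAt (isOpen_ball.mem_nhds hz)
    -- order bookkeeping
    have horder_ne : ∀ b ∈ Z, b ≠ a → aord F₁ b = aord F b := by
      intro b hbZ hba
      have hbR : b ∈ ball c R := hball ((hZ b).mp hbZ).1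
      have hAb : AnalyticAt ℂ F b := hF.analyticAt (isOpen_ball.mem_nhds hbR)
      have hAb₁ : AnalyticAt ℂ F₁ b := hanF₁ b hbR
      rw [aord_analytic hAb, aord_analytic hAb₁, order_dslope_of_ne hAb hba haF hAb₁]
    have hordera : aord F₁ a = k := by
      have := order_dslope_self hA (by rw [horda, hk]) (analyticAt_dslope_self hA)
      exact aord_eq_of_order_eq_nat (analyticAt_dslope_self hA) this
    have hsum₁ : ∑ z ∈ Z₁, aord F₁ z = n := by
      have hfil : ∑ z ∈ Z₁, aord F₁ z = ∑ z ∈ Z, aord F₁ z := by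
        rw [hZ₁def]
        refine Finset.sum_filter_of_ne ?_
        intro x hx hax
        by_contra h0
        exact hax (aord_eq_zero_of_ne (hanF₁ x (hball ((hZ x).mp hx).1)) h0)
      have hsplit : aord F a + ∑ z ∈ Z.erase a, aord F z = n + 1 := by
        rw [Finset.add_sum_erase Z _ haZ]; exact hsum
      have hsplit₁ : ∑ z ∈ Z, aord F₁ z = aord F₁ a + ∑ z ∈ Z.erase a, aord F₁ z :=
        (Finset.add_sum_erase Z _ haZ).symm
      have hcongr : ∑ z ∈ Z.erase a, aord F₁ z = ∑ z ∈ Z.erase a, aord F z := by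
        refine Finset.sum_congr rfl ?_
        intro b hb
        exact horder_ne b (Finset.mem_of_mem_erase hb) (Finset.ne_of_mem_erase hb)
      rw [hfil, hsplit₁, hcongr, hordera]
      omega
    -- integrand identity on the sphere
    have hsphR : sphere c r ⊆ ball c R := sphere_subset_ballR hrR
    have hEq : EqOn (fun z => deriv F z / F z)
        (fun z => (z - a)⁻¹ + deriv F₁ z / F₁ z) (sphere c r) := by
      intro z hz
      have hzR : z ∈ ball c R := hsphR hz
      have hFz : F z ≠ 0 := hsph z hz
      have hF₁z : F₁ z ≠ 0 := hsph₁ z hz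
      have hza : z - a ≠ 0 := by
        intro h0
        exact hFz (by rw [h1 z, h0, zero_mul])
      have hFfun : F = fun w => (w - a) * F₁ w := funext h1
      have hd₁ : HasDerivAt F₁ (deriv F₁ z) z :=
        (hF₁.differentiableAt (isOpen_ball.mem_nhds hzR)).hasDerivAt
      have hdF : deriv F z = F₁ z + (z - a) * deriv F₁ z := by
        conv_lhs => rw [hFfun]
        have := (((hasDerivAt_id z).sub_const a).mul hd₁).deriv
        simpa [Pi.mul_def] using this
      show deriv F z / F z = (z - a)⁻¹ + deriv F₁ z / F₁ z
      rw [hdF, h1 z]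
      field_simp
    -- integrability
    have hint₁ : CircleIntegrable (fun z => (z - a)⁻¹) c r := by
      refine ContinuousOn.circleIntegrable hr.le ?_
      refine ContinuousOn.inv₀ ((continuous_id.sub continuous_const).continuousOn) ?_
      intro z hz
      have hza : z ≠ a := by
        rintro rfl
        rw [mem_sphere] at hz
        rw [mem_ball] at haball
        linarith
      exact sub_ne_zero.mpr hza
    have hint₂ : CircleIntegrable (fun z => deriv F₁ z / F₁ z) c r := by
      refine ContinuousOn.circleIntegrable hr.le ?_
      exact ContinuousOn.div
        (((hF₁.analyticOnNhd isOpen_ball).deriv).continuousOn.mono hsphR)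
        (hF₁.continuousOn.mono hsphR) hsph₁
    have hIH := IH F₁ hF₁ hsph₁ Z₁ hZ₁ hsum₁
    calc (∮ z in C(c, r), deriv F z / F z)
        = ∮ z in C(c, r), ((z - a)⁻¹ + deriv F₁ z / F₁ z) :=
          circleIntegral.integral_congr hr.le hEq
      _ = (∮ z in C(c, r), (z - a)⁻¹) + ∮ z in C(c, r), deriv F₁ z / F₁ z :=
          circle_integral_add hint₁ hint₂
      _ = 2 * Real.pi * Complex.I + 2 * Real.pi * Complex.I * n := by
          rw [circleIntegral.integral_sub_inv_of_mem_ball haball, hIH]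
      _ = 2 * Real.pi * Complex.I * (n + 1 : ℕ) := by
          push_cast
          ring

lemma rouche_disk {c : ℂ} {r R : ℝ} (hr : 0 < r) (hrR : r < R)
    {F G : ℂ → ℂ} (hF : DifferentiableOn ℂ F (ball c R)) (hG : DifferentiableOn ℂ G (ball c R))
    (hlt : ∀ z ∈ sphere c r, ‖F z - G z‖ < ‖G z‖)
    (ZF ZG : Finset ℂ) (hZF : ∀ z, z ∈ ZF ↔ z ∈ ball c r ∧ F z = 0)
    (hZG : ∀ z, z ∈ ZG ↔ z ∈ ball c r ∧ G z = 0) :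
    ∑ z ∈ ZF, aord F z = ∑ z ∈ ZG, aord G z := by
  have hsphR : sphere c r ⊆ ball c R := sphere_subset_ballR hrR
  have hGsph : ∀ z ∈ sphere c r, G z ≠ 0 := by
    intro z hz h0
    have := hlt z hz
    rw [h0] at this
    simp at this
    exact absurd this (not_lt.mpr (norm_nonneg _))
  have hFsph : ∀ z ∈ sphere c r, F z ≠ 0 := by
    intro z hz h0
    have := hlt z hz
    rw [h0, zero_sub, norm_neg] at this
    exact lt_irrefl _ this
  have hAPF := argument_principle hr hrR (∑ z ∈ ZF, aord F z) F hF hFsph ZF hZF rfl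
  have hAPG := argument_principle hr hrR (∑ z ∈ ZG, aord G z) G hG hGsph ZG hZG rfl
  -- integrability of both integrands
  have hcontF : ContinuousOn (fun z => deriv F z / F z) (sphere c r) :=
    ContinuousOn.div (((hF.analyticOnNhd isOpen_ball).deriv).continuousOn.mono hsphR)
      (hF.continuousOn.mono hsphR) hFsph
  have hcontG : ContinuousOn (fun z => deriv G z / G z) (sphere c r) :=
    ContinuousOn.div (((hG.analyticOnNhd isOpen_ball).deriv).continuousOn.mono hsphR)
      (hG.continuousOn.mono hsphR) hGsph
  have hintF : CircleIntegrable (fun z => deriv F z / F z) c r :=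
    hcontF.circleIntegrable hr.le
  have hintG : CircleIntegrable (fun z => deriv G z / G z) c r :=
    hcontG.circleIntegrable hr.le
  -- the quotient and the open set where its log is defined
  set q : ℂ → ℂ := fun z => F z / G z with hqdef
  set A : Set ℂ := {z | z ∈ ball c R ∧ G z ≠ 0 ∧ 0 < (q z).re} with hAdef
  have hAopen : IsOpen A := by
    have hB : IsOpen {z | z ∈ ball c R ∧ G z ≠ 0} := by
      have : {z | z ∈ ball c R ∧ G z ≠ 0} = ball c R ∩ G ⁻¹' ({0}ᶜ) := by
        ext z; simp [mem_inter_iff]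
      rw [this]
      exact hG.continuousOn.isOpen_inter_preimage isOpen_ball isOpen_compl_singleton
    have hqc : ContinuousOn (fun z => (q z).re) {z | z ∈ ball c R ∧ G z ≠ 0} := by
      refine Complex.continuous_re.comp_continuousOn ?_
      exact ContinuousOn.div (hF.continuousOn.mono (fun z hz => hz.1))
        (hG.continuousOn.mono (fun z hz => hz.1)) (fun z hz => hz.2)
    have : A = {z | z ∈ ball c R ∧ G z ≠ 0} ∩ (fun z => (q z).re) ⁻¹' (Ioi 0) := by
      ext z
      simp only [hAdef, mem_setOf_eq, mem_inter_iff, mem_preimage, mem_Ioi]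
      tauto
    rw [this]
    exact hqc.isOpen_inter_preimage hB isOpen_Ioi
  have hsphA : sphere c r ⊆ A := by
    intro z hz
    have hGz := hGsph z hz
    refine ⟨hsphR hz, hGz, ?_⟩
    have h1 : ‖q z - 1‖ < 1 := by
      have hq1 : q z - 1 = (F z - G z) / G z := by
        rw [hqdef]
        field_simp
      rw [hq1, norm_div, div_lt_one (norm_pos_iff.mpr hGz)]
      exact hlt z hz
    have h2 : (1 - q z).re ≤ ‖1 - q z‖ := Complex.re_le_norm _
    have h3 : ‖1 - q z‖ = ‖q z - 1‖ := by
      rw [← neg_sub, norm_neg]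
    have h4 : (1 - q z).re = 1 - (q z).re := by simp
    linarith
  -- pointwise identity on the sphere
  have hquq : ∀ z ∈ sphere c r, deriv q z / q z = deriv F z / F z - deriv G z / G z := by
    intro z hz
    have hzR := hsphR hz
    have hFz := hFsph z hz
    have hGz := hGsph z hz
    have hdF : HasDerivAt F (deriv F z) z :=
      (hF.differentiableAt (isOpen_ball.mem_nhds hzR)).hasDerivAt
    have hdG : HasDerivAt G (deriv G z) z :=
      (hG.differentiableAt (isOpen_ball.mem_nhds hzR)).hasDerivAt
    have hdq : HasDerivAt q ((deriv F z * G z - F z * deriv G z) / (G z)^2) z := hdF.div hdG hGz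
    rw [hdq.deriv, hqdef]
    field_simp
  -- the difference integral vanishes
  have hkey : (∮ z in C(c, r), (deriv F z / F z - deriv G z / G z)) = 0 := by
    have huA : ∀ z ∈ A, HasDerivAt (fun w => Complex.log (q w)) (deriv q z / q z) z := by
      intro z hz
      obtain ⟨hzR, hGz, hre⟩ := hz
      have hqd : DifferentiableAt ℂ q z :=
        (hF.differentiableAt (isOpen_ball.mem_nhds hzR)).div
          (hG.differentiableAt (isOpen_ball.mem_nhds hzR)) hGz
      have hslit : q z ∈ Complex.slitPlane := Or.inl hre
      have := (Complex.hasDerivAt_log hslit).comp z hqd.hasDerivAt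
      simpa [Function.comp_def, div_eq_inv_mul] using this
    have hper : circleMap c r (2 * Real.pi) = circleMap c r 0 := by
      simpa using periodic_circleMap c r 0
    have hqint : CircleIntegrable (fun z => deriv q z / q z) c r := by
      refine ContinuousOn.circleIntegrable hr.le ?_
      exact ContinuousOn.congr (hcontF.sub hcontG) (fun z hz => hquq z hz)
    have hzero : (∮ z in C(c, r), deriv q z / q z) = 0 := by
      have hderL : ∀ θ ∈ uIcc (0:ℝ) (2*Real.pi),
          HasDerivAt (fun t => Complex.log (q (circleMap c r t)))
          (deriv (circleMap c r) θ • (deriv q (circleMap c r θ) / q (circleMap c r θ))) θ := by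
        intro θ _
        have hzs : circleMap c r θ ∈ sphere c r := circleMap_mem_sphere c hr.le θ
        have h1 := (huA _ (hsphA hzs)).comp θ (hasDerivAt_circleMap c r θ)
        rw [deriv_circleMap]
        simpa [Function.comp_def, smul_eq_mul, mul_comm] using h1
      have hint := hqint.out
      rw [circleIntegral, intervalIntegral.integral_eq_sub_of_hasDerivAt hderL hint, hper]
      simp
    calc (∮ z in C(c, r), (deriv F z / F z - deriv G z / G z))
        = ∮ z in C(c, r), deriv q z / q z :=
          (circleIntegral.integral_congr hr.le (fun z hz => (hquq z hz))).symm
      _ = 0 := hzero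
  have hsub : 2 * Real.pi * Complex.I * ((∑ z ∈ ZF, aord F z : ℕ) : ℂ)
      - 2 * Real.pi * Complex.I * ((∑ z ∈ ZG, aord G z : ℕ) : ℂ) = 0 := by
    rw [← hAPF, ← hAPG, ← circleIntegral.integral_sub hintF hintG]
    exact hkey
  have heq := sub_eq_zero.mp hsub
  have := mul_left_cancel₀ Complex.two_pi_I_ne_zero heq
  exact_mod_cast this

lemma frontier_nonempty_of_bounded {W : Set ℂ} (hW : W.Nonempty) (hb : Bornology.IsBounded W) :
    (frontier W).Nonempty := by
  rw [nonempty_iff_ne_empty]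
  intro h
  rcases isClopen_iff.mp (isClopen_iff_frontier_eq_empty.mpr h) with h1 | h1
  · exact hW.ne_empty h1
  · exact NormedSpace.unbounded_univ ℝ ℂ (h1 ▸ hb)

lemma global_no_ev_zero {U V : Set ℂ} (hU : IsOpen U) (hUb : Bornology.IsBounded U)
    (hV : IsOpen V) (hUV : closure U ⊆ V) {F : ℂ → ℂ} (hF : DifferentiableOn ℂ F V)
    (hfr : ∀ z ∈ frontier U, F z ≠ 0) {z₀ : ℂ} (hz₀ : z₀ ∈ U)
    (hev : ∀ᶠ w in 𝓝 z₀, F w = 0) : False := by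
  set W := connectedComponentIn U z₀ with hWdef
  have hWsub : W ⊆ U := connectedComponentIn_subset U z₀
  have hz₀W : z₀ ∈ W := mem_connectedComponentIn hz₀
  have hAn : AnalyticOnNhd ℂ F W := fun w hw =>
    hF.analyticAt (hV.mem_nhds (hUV (subset_closure (hWsub hw))))
  have hEq : EqOn F 0 W :=
    hAn.eqOn_zero_of_preconnected_of_eventuallyEq_zero isPreconnected_connectedComponentIn hz₀W hev
  obtain ⟨w, hwf⟩ := frontier_nonempty_of_bounded ⟨z₀, hz₀W⟩ (hUb.subset hWsub)
  have hwcl : w ∈ closure W := hwf.1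
  have hFw : F w = 0 := by
    have hcont : ContinuousAt F w :=
      hF.continuousOn.continuousAt (hV.mem_nhds (hUV (closure_mono hWsub hwcl)))
    by_contra h0
    have hev := hcont.eventually_ne h0
    obtain ⟨y, hy1, hy2⟩ := ((mem_closure_iff_frequently.mp hwcl).and_eventually hev).exists
    exact hy2 (hEq hy1)
  have hWopen : IsOpen W := hU.connectedComponentIn
  have hwU : w ∉ U := by
    intro hwU
    have hpre : IsPreconnected (insert w W) :=
      isPreconnected_connectedComponentIn.subset_closure (subset_insert w W)
        (insert_subset hwcl subset_closure)
    have hins : insert w W ⊆ W := by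
      rw [hWdef]
      exact hpre.subset_connectedComponentIn (mem_insert_of_mem w hz₀W)
        (insert_subset hwU hWsub)
    have hwW : w ∈ W := hins (mem_insert w W)
    rw [← hWopen.interior_eq] at hwW
    exact hwf.2 hwW
  exact hfr w (by rw [hU.frontier_eq]; exact ⟨closure_mono hWsub hwcl, hwU⟩) hFw

lemma global_zeros_finite {U V : Set ℂ} (hU : IsOpen U) (hUb : Bornology.IsBounded U)
    (hV : IsOpen V) (hUV : closure U ⊆ V) {F : ℂ → ℂ} (hF : DifferentiableOn ℂ F V)
    (hfr : ∀ z ∈ frontier U, F z ≠ 0) : {z | z ∈ U ∧ F z = 0}.Finite := by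
  rw [← Set.not_infinite]
  intro hinf
  have hK : IsCompact (closure U) :=
    Metric.isCompact_of_isClosed_isBounded isClosed_closure hUb.closure
  obtain ⟨x, hxK, hacc⟩ := hinf.exists_accPt_of_subset_isCompact hK
    (fun z hz => subset_closure hz.1)
  have hxV : x ∈ V := hUV hxK
  have hcont : ContinuousAt F x := (hF.continuousOn.continuousAt (hV.mem_nhds hxV))
  have hfreq : ∃ᶠ w in 𝓝[≠] x, F w = 0 := by
    rw [frequently_nhdsWithin_iff]
    exact ((accPt_iff_frequently (x := x)).mp hacc).mono (fun y hy => ⟨hy.2.2, hy.1⟩)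
  have hFx : F x = 0 := by
    by_contra h0
    have hev := hcont.eventually_ne h0
    have := (hfreq.filter_mono nhdsWithin_le_nhds).and_eventually hev
    obtain ⟨y, hy1, hy2⟩ := this.exists
    exact hy2 hy1
  rcases Classical.em (x ∈ U) with hxU | hxU
  · have hA : AnalyticAt ℂ F x := hF.analyticAt (hV.mem_nhds hxV)
    exact global_no_ev_zero hU hUb hV hUV hF hfr hxU
      (hA.frequently_zero_iff_eventually_zero.mp hfreq)
  · exact hfr x (by rw [hU.frontier_eq]; exact ⟨hxK, hxU⟩) hFx

end Rouche

open Rouche Metric Set Filter Topology in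
/-- **Rouché's theorem.** Let `f` and `g` be holomorphic on an open set
`V` containing the closure of a bounded domain `U`, and suppose `|f - g| < |g|` on the
boundary of `U`.  If `mf z` (resp. `mg z`) denotes the multiplicity of `z` as a zero of
`f` (resp. `g`), and `Sf` (resp. `Sg`) is the (finite) set of zeros of `f` (resp. `g`)
in `U`, then `f` and `g` have the same number of zeros in `U` counted with
multiplicity: `∑_{z ∈ Sf} mf z = ∑_{z ∈ Sg} mg z`. -/
theorem stmt19 (U : Set ℂ) (hU : IsOpen U) (hUb : Bornology.IsBounded U)
    (V : Set ℂ) (hV : IsOpen V) (hUV : closure U ⊆ V)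
    (f g : ℂ → ℂ) (hf : DifferentiableOn ℂ f V) (hg : DifferentiableOn ℂ g V)
    (hbd : ∀ z ∈ frontier U, ‖f z - g z‖ < ‖g z‖)
    (mf mg : ℂ → ℕ)
    (hmf : ∀ z ∈ U, ∃ h : ℂ → ℂ, AnalyticAt ℂ h z ∧ h z ≠ 0 ∧
      ∀ᶠ w in nhds z, f w = (w - z) ^ mf z * h w)
    (hmg : ∀ z ∈ U, ∃ h : ℂ → ℂ, AnalyticAt ℂ h z ∧ h z ≠ 0 ∧
      ∀ᶠ w in nhds z, g w = (w - z) ^ mg z * h w)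
    (Sf Sg : Finset ℂ)
    (hSf : ∀ z : ℂ, z ∈ Sf ↔ z ∈ U ∧ f z = 0)
    (hSg : ∀ z : ℂ, z ∈ Sg ↔ z ∈ U ∧ g z = 0) :
    ∑ z ∈ Sf, mf z = ∑ z ∈ Sg, mg z := by
  classical
  set φ : ℝ → ℂ → ℂ := fun t z => g z + (t:ℂ) * (f z - g z) with hφdef
  have hφdiff : ∀ t, DifferentiableOn ℂ (φ t) V := fun t =>
    hg.add ((differentiableOn_const _).mul (hf.sub hg))
  have hφfr : ∀ t ∈ Icc (0:ℝ) 1, ∀ z ∈ frontier U, φ t z ≠ 0 := by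
    intro t ht z hz h0
    have h1 := hbd z hz
    have h2 : g z = -((t:ℂ) * (f z - g z)) := by
      have : g z + (t:ℂ) * (f z - g z) = 0 := h0
      linear_combination this
    have h3 : ‖g z‖ = t * ‖f z - g z‖ := by
      conv_lhs => rw [h2]
      rw [norm_neg, norm_mul, Complex.norm_real, Real.norm_eq_abs, _root_.abs_of_nonneg ht.1]
    nlinarith [norm_nonneg (f z - g z), ht.2, h1, h3]
  set Zs : ℝ → Set ℂ := fun t => {z | z ∈ U ∧ φ t z = 0} with hZsdef
  have hfin : ∀ t ∈ Icc (0:ℝ) 1, (Zs t).Finite := fun t ht =>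
    global_zeros_finite hU hUb hV hUV (hφdiff t) (hφfr t ht)
  set N : ℝ → ℕ := fun t => if h : (Zs t).Finite then ∑ z ∈ h.toFinset, aord (φ t) z else 0
    with hNdef
  have hNval : ∀ (t : ℝ) (h : (Zs t).Finite), N t = ∑ z ∈ h.toFinset, aord (φ t) z := by
    intro t h
    simp only [hNdef, dif_pos h]
  -- endpoints
  have hend : ∀ (t : ℝ), t ∈ Icc (0:ℝ) 1 → ∀ (F : ℂ → ℂ), φ t = F →
      ∀ (S : Finset ℂ) (m : ℂ → ℕ), (∀ z, z ∈ S ↔ z ∈ U ∧ F z = 0) →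
      (∀ z ∈ U, ∃ h : ℂ → ℂ, AnalyticAt ℂ h z ∧ h z ≠ 0 ∧
        ∀ᶠ w in nhds z, F w = (w - z) ^ m z * h w) →
      N t = ∑ z ∈ S, m z := by
    intro t ht F hφF S m hS hm
    have hft : (Zs t).Finite := hfin t ht
    rw [hNval t hft]
    have htf : hft.toFinset = S := by
      ext z
      rw [Set.Finite.mem_toFinset, hS]
      simp only [hZsdef, mem_setOf_eq, hφF]
    rw [htf]
    refine Finset.sum_congr rfl (fun z hz => ?_)
    obtain ⟨hzU, hz0⟩ := (hS z).mp hz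
    obtain ⟨h, hh, hh0, hfac⟩ := hm z hzU
    have hA : AnalyticAt ℂ F z := (hφF ▸ hφdiff t).analyticAt
      (hV.mem_nhds (hUV (subset_closure hzU)))
    have hord : hA.order = (m z : ℕ) := by
      refine (hA.order_eq_nat_iff (m z)).mpr ⟨h, hh, hh0, ?_⟩
      filter_upwards [hfac] with w hw
      rw [smul_eq_mul]
      exact hw
    rw [hφF]
    exact aord_eq_of_order_eq_nat hA hord
  have hφ1 : φ 1 = f := by
    funext z
    show g z + (1:ℂ) * (f z - g z) = f z
    ring
  have hφ0 : φ 0 = g := by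
    funext z
    show g z + (0:ℂ) * (f z - g z) = g z
    ring
  have hN1 : N 1 = ∑ z ∈ Sf, mf z :=
    hend 1 (by norm_num) f hφ1 Sf mf hSf hmf
  have hN0 : N 0 = ∑ z ∈ Sg, mg z :=
    hend 0 (by norm_num) g hφ0 Sg mg hSg hmg
  -- local constancy
  have hlc : ∀ t₀ ∈ Icc (0:ℝ) 1, ∃ δ > 0, ∀ t ∈ Icc (0:ℝ) 1, |t - t₀| < δ → N t = N t₀ := by
    intro t₀ ht₀
    have hfin₀ := hfin t₀ ht₀
    set Z0 := hfin₀.toFinset with hZ0def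
    have hZ0mem : ∀ a, a ∈ Z0 ↔ a ∈ U ∧ φ t₀ a = 0 := by
      intro a
      rw [hZ0def, Set.Finite.mem_toFinset]
      rfl
    -- choice of radii around each zero of φ t₀
    have hradii : ∀ a : ℂ, ∃ r : ℝ, 0 < r ∧ (a ∈ Z0 →
        closedBall a (2*r) ⊆ U ∧ (∀ w ∈ closedBall a (2*r), w ≠ a → φ t₀ w ≠ 0) ∧
        ∀ b ∈ Z0, b ≠ a → 3*r ≤ dist a b) := by
      intro a
      rcases Classical.em (a ∈ Z0) with haZ | haZ
      swap
      · exact ⟨1, one_pos, fun h => absurd h haZ⟩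
      obtain ⟨haU, ha0⟩ := (hZ0mem a).mp haZ
      have hA : AnalyticAt ℂ (φ t₀) a :=
        (hφdiff t₀).analyticAt (hV.mem_nhds (hUV (subset_closure haU)))
      have hiso : ∀ᶠ w in 𝓝[≠] a, φ t₀ w ≠ 0 := by
        rcases hA.eventually_eq_zero_or_eventually_ne_zero with h | h
        · exact absurd (global_no_ev_zero hU hUb hV hUV (hφdiff t₀) (hφfr t₀ ht₀) haU h)
            (fun x => x)
        · exact h
      have h1 : ∀ᶠ w in 𝓝 a, (w ≠ a → φ t₀ w ≠ 0) ∧ w ∈ U := by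
        refine Filter.Eventually.and ?_ (hU.eventually_mem haU)
        rw [eventually_nhdsWithin_iff] at hiso
        exact hiso.mono (fun w hw hwa => hw hwa)
      obtain ⟨ε, hε, hball⟩ := Metric.eventually_nhds_iff_ball.mp h1
      obtain ⟨d, hd, hdist⟩ : ∃ d > 0, ∀ b ∈ Z0, b ≠ a → d ≤ dist a b := by
        rcases (Z0.erase a).eq_empty_or_nonempty with he | hne
        · refine ⟨1, one_pos, fun b hb hba => ?_⟩
          exact absurd (Finset.mem_erase.mpr ⟨hba, hb⟩)
            (by rw [he]; exact Finset.notMem_empty b)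
        · refine ⟨(Z0.erase a).inf' hne (fun b => dist a b), ?_, ?_⟩
          · rw [gt_iff_lt, Finset.lt_inf'_iff]
            intro b hb
            exact dist_pos.mpr (fun h => (Finset.mem_erase.mp hb).1 h.symm)
          · intro b hb hba
            exact Finset.inf'_le _ (Finset.mem_erase.mpr ⟨hba, hb⟩)
      have hmin : 0 < min (ε/3) (d/3) := by positivity
      refine ⟨min (ε/3) (d/3), hmin, fun _ => ⟨?_, ?_, ?_⟩⟩
      · intro w hw
        have h2 : dist w a < ε := by
          have h3 := mem_closedBall.mp hw
          have h4 := min_le_left (ε/3) (d/3)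
          linarith
        exact (hball w (mem_ball.mpr h2)).2
      · intro w hw hwa
        have h2 : dist w a < ε := by
          have h3 := mem_closedBall.mp hw
          have h4 := min_le_left (ε/3) (d/3)
          linarith
        exact (hball w (mem_ball.mpr h2)).1 hwa
      · intro b hb hba
        have h2 := min_le_right (ε/3) (d/3)
        have h3 := hdist b hb hba
        linarith
    choose rad hradpos hradspec using hradii
    -- the compact set of all zeros over the time interval
    have hKclos : IsCompact (closure U) :=
      Metric.isCompact_of_isClosed_isBounded isClosed_closure hUb.closure
    set Q : Set (ℝ × ℂ) := {p | p.1 ∈ Icc (0:ℝ) 1 ∧ p.2 ∈ closure U ∧ φ p.1 p.2 = 0} with hQdef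
    have hψ : ContinuousOn (fun p : ℝ × ℂ => φ p.1 p.2) (Icc (0:ℝ) 1 ×ˢ closure U) := by
      have hgc : ContinuousOn (fun p : ℝ × ℂ => g p.2) (Icc (0:ℝ) 1 ×ˢ closure U) :=
        hg.continuousOn.comp continuous_snd.continuousOn (fun p hp => hUV hp.2)
      have hfc : ContinuousOn (fun p : ℝ × ℂ => f p.2) (Icc (0:ℝ) 1 ×ˢ closure U) :=
        hf.continuousOn.comp continuous_snd.continuousOn (fun p hp => hUV hp.2)
      have htc : ContinuousOn (fun p : ℝ × ℂ => ((p.1 : ℝ) : ℂ)) (Icc (0:ℝ) 1 ×ˢ closure U) :=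
        (Complex.continuous_ofReal.comp continuous_fst).continuousOn
      exact hgc.add (htc.mul (hfc.sub hgc))
    have hQc : IsCompact Q := by
      refine IsCompact.of_isClosed_subset ((isCompact_Icc (a := (0:ℝ)) (b := 1)).prod hKclos) ?_ ?_
      · have hcl := hψ.preimage_isClosed_of_isClosed
          (IsClosed.prod isClosed_Icc isClosed_closure) (isClosed_singleton (x := (0:ℂ)))
        have : Q = (Icc (0:ℝ) 1 ×ˢ closure U) ∩
            (fun p : ℝ × ℂ => φ p.1 p.2) ⁻¹' {0} := by
          ext p
          simp only [hQdef, mem_setOf_eq, mem_inter_iff, mem_prod, mem_preimage,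
            mem_singleton_iff]
          tauto
        rw [this]
        exact hcl
      · intro p hp
        exact ⟨hp.1, hp.2.1⟩
    set K0 : Set ℂ := Prod.snd '' Q with hK0def
    have hK0c : IsCompact K0 := hQc.image continuous_snd
    have hK0U : K0 ⊆ U := by
      rintro z ⟨p, hpQ, rfl⟩
      by_contra hzU
      exact hφfr p.1 hpQ.1 p.2 (by rw [hU.frontier_eq]; exact ⟨hpQ.2.1, hzU⟩) hpQ.2.2
    -- the compact set where φ t₀ stays away from 0
    set C' : Set ℂ := (K0 \ ⋃ a ∈ Z0, ball a (rad a)) ∪ ⋃ a ∈ Z0, sphere a (rad a) with hC'def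
    have hC'c : IsCompact C' := by
      refine IsCompact.union ?_ ?_
      · exact hK0c.diff (isOpen_biUnion (fun a _ => isOpen_ball))
      · exact Z0.finite_toSet.isCompact_biUnion (fun a _ => isCompact_sphere a (rad a))
    have hC'U : C' ⊆ U := by
      rintro z (hz | hz)
      · exact hK0U hz.1
      · obtain ⟨a, ha, hza⟩ := mem_iUnion₂.mp hz
        exact ((hradspec a ha).1)
          ((sphere_subset_closedBall.trans
            (closedBall_subset_closedBall (by linarith [hradpos a]))) hza)
    have hC'ne : ∀ z ∈ C', φ t₀ z ≠ 0 := by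
      rintro z (hz | hz) h0
      · have hzU : z ∈ U := hK0U hz.1
        have hzZ : z ∈ Z0 := (hZ0mem z).mpr ⟨hzU, h0⟩
        exact hz.2 (mem_biUnion hzZ (mem_ball_self (hradpos z)))
      · obtain ⟨a, ha, hza⟩ := mem_iUnion₂.mp hz
        have hznea : z ≠ a := by
          intro h
          rw [h, mem_sphere, dist_self] at hza
          exact (hradpos a).ne hza
        exact (hradspec a ha).2.1 z
          ((sphere_subset_closedBall.trans
            (closedBall_subset_closedBall (by linarith [hradpos a]))) hza) hznea h0
    obtain ⟨ε, hε, hεle⟩ : ∃ ε > 0, ∀ z ∈ C', ε ≤ ‖φ t₀ z‖ := by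
      rcases C'.eq_empty_or_nonempty with he | hne
      · exact ⟨1, one_pos, by rw [he]; simp⟩
      · have hcontabs : ContinuousOn (fun z => ‖φ t₀ z‖) C' :=
          continuous_norm.comp_continuousOn
            ((hφdiff t₀).continuousOn.mono (fun z hz => hUV (subset_closure (hC'U hz))))
        obtain ⟨x, hxC, hxmin⟩ := hC'c.exists_isMinOn hne hcontabs
        refine ⟨‖φ t₀ x‖, norm_pos_iff.mpr (hC'ne x hxC), ?_⟩
        intro z hz
        exact hxmin hz
    -- the uniform bound on |f - g|
    obtain ⟨M, hM⟩ := hKclos.exists_bound_of_continuousOn ((hf.sub hg).continuousOn.mono hUV)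
    have hM1 : (0:ℝ) < max M 1 := lt_of_lt_of_le one_pos (le_max_right M 1)
    refine ⟨ε / max M 1, by positivity, ?_⟩
    intro t ht htδ
    have hclose : ∀ z ∈ closure U, ‖φ t z - φ t₀ z‖ < ε := by
      intro z hz
      have he1 : φ t z - φ t₀ z = ((t:ℂ) - (t₀:ℂ)) * (f z - g z) := by
        show (g z + (t:ℂ) * (f z - g z)) - (g z + (t₀:ℂ) * (f z - g z)) = _
        ring
      rw [he1, norm_mul, ← Complex.ofReal_sub, Complex.norm_real, Real.norm_eq_abs]
      have h2 : ‖f z - g z‖ ≤ max M 1 :=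
        le_trans (by simpa using hM z hz) (le_max_left M 1)
      calc |t - t₀| * ‖f z - g z‖ ≤ |t - t₀| * max M 1 :=
            mul_le_mul_of_nonneg_left h2 (abs_nonneg _)
        _ < ε := (lt_div_iff₀ hM1).mp htδ
    have hfin_t := hfin t ht
    have hmem_t : ∀ z, z ∈ hfin_t.toFinset ↔ z ∈ U ∧ φ t z = 0 := by
      intro z
      rw [Set.Finite.mem_toFinset]
      rfl
    have hsub_t : ∀ z, z ∈ U → φ t z = 0 → ∃ a ∈ Z0, z ∈ ball a (rad a) := by
      intro z hzU hz0
      have hzK : z ∈ K0 := ⟨(t, z), ⟨ht, subset_closure hzU, hz0⟩, rfl⟩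
      by_contra hco
      push_neg at hco
      have hzC : z ∈ C' := by
        refine Or.inl ⟨hzK, ?_⟩
        intro hmem
        obtain ⟨a, ha, hball⟩ := mem_iUnion₂.mp hmem
        exact hco a ha hball
      have h1 := hεle z hzC
      have h2 := hclose z (subset_closure hzU)
      rw [hz0, zero_sub, norm_neg] at h2
      linarith
    set ZFb : ℂ → Finset ℂ := fun a => hfin_t.toFinset.filter (fun z => z ∈ ball a (rad a))
      with hZFbdef
    have hZFmem : ∀ a z, z ∈ ZFb a ↔ (z ∈ U ∧ φ t z = 0) ∧ z ∈ ball a (rad a) := by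
      intro a z
      rw [hZFbdef]
      simp only [Finset.mem_filter]
      rw [hmem_t]
    have hball_count : ∀ a ∈ Z0, ∑ z ∈ ZFb a, aord (φ t) z = aord (φ t₀) a := by
      intro a ha
      obtain ⟨hsubU, hne0, _⟩ := hradspec a ha
      have hra := hradpos a
      have hrr : rad a < 2 * rad a := by linarith
      have hsubU' : ball a (rad a) ⊆ U := fun w hw =>
        hsubU (ball_subset_closedBall (ball_subset_ball (by linarith) hw))
      have hballV : ball a (2 * rad a) ⊆ V := fun w hw =>
        hUV (subset_closure (hsubU (ball_subset_closedBall hw)))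
      have hsph : ∀ z ∈ sphere a (rad a),
          ‖φ t z - φ t₀ z‖ < ‖φ t₀ z‖ := by
        intro z hz
        have hzC : z ∈ C' := Or.inr (mem_biUnion ha hz)
        exact lt_of_lt_of_le (hclose z (subset_closure (hC'U hzC))) (hεle z hzC)
      have hZF : ∀ z, z ∈ ZFb a ↔ z ∈ ball a (rad a) ∧ φ t z = 0 := by
        intro z
        rw [hZFmem]
        constructor
        · rintro ⟨⟨_, h2⟩, h3⟩
          exact ⟨h3, h2⟩
        · rintro ⟨h1, h2⟩
          exact ⟨⟨hsubU' h1, h2⟩, h1⟩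
      have hZG : ∀ z, z ∈ ({a} : Finset ℂ) ↔ z ∈ ball a (rad a) ∧ φ t₀ z = 0 := by
        intro z
        simp only [Finset.mem_singleton]
        constructor
        · rintro rfl
          exact ⟨mem_ball_self hra, ((hZ0mem z).mp ha).2⟩
        · rintro ⟨h1, h2⟩
          by_contra hza
          exact hne0 z (ball_subset_closedBall (ball_subset_ball (by linarith) h1)) hza h2
      have hres := rouche_disk hra hrr ((hφdiff t).mono hballV) ((hφdiff t₀).mono hballV)
        hsph (ZFb a) {a} hZF hZG
      rw [hres]
      simp
    have hpart : hfin_t.toFinset = Z0.biUnion ZFb := by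
      ext z
      rw [Finset.mem_biUnion, hmem_t]
      constructor
      · intro hz
        obtain ⟨a, ha, hball⟩ := hsub_t z hz.1 hz.2
        exact ⟨a, ha, (hZFmem a z).mpr ⟨hz, hball⟩⟩
      · rintro ⟨a, ha, hz⟩
        exact ((hZFmem a z).mp hz).1
    have hdisj : (↑Z0 : Set ℂ).PairwiseDisjoint ZFb := by
      intro a ha b hb hab
      refine Finset.disjoint_left.mpr ?_
      intro x hxa hxb
      have h1 : x ∈ ball a (rad a) := ((hZFmem a x).mp hxa).2
      have h2 : x ∈ ball b (rad b) := ((hZFmem b x).mp hxb).2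
      have ha' : a ∈ Z0 := ha
      have hb' : b ∈ Z0 := hb
      have hd1 := (hradspec a ha').2.2 b hb' (fun h => hab h.symm)
      have htri := dist_triangle a x b
      rw [mem_ball] at h1 h2
      rw [dist_comm x a] at h1
      have hrb := hradpos b
      have hdab : dist a b ≤ dist a x + dist x b := htri
      have h3 : 3 * rad b ≤ dist b a := (hradspec b hb').2.2 a ha' hab
      rw [dist_comm b a] at h3
      linarith
    rw [hNval t hfin_t, hNval t₀ hfin₀, hpart, Finset.sum_biUnion hdisj]
    exact Finset.sum_congr rfl (fun a ha => hball_count a ha)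
  -- conclude by connectedness of the interval
  haveI : PreconnectedSpace (Icc (0:ℝ) 1) :=
    isPreconnected_iff_preconnectedSpace.mp isPreconnected_Icc
  have hloc : IsLocallyConstant (fun x : Icc (0:ℝ) 1 => N x.1) := by
    rw [IsLocallyConstant.iff_exists_open]
    intro x
    obtain ⟨δ, hδ, hδp⟩ := hlc x.1 x.2
    refine ⟨Subtype.val ⁻¹' (ball (x.1 : ℝ) δ), isOpen_ball.preimage continuous_subtype_val,
      by simpa [mem_ball, Real.dist_eq] using hδ, ?_⟩
    intro y hy
    exact hδp y.1 y.2 (by simpa [mem_ball, Subtype.dist_eq, Real.dist_eq] using hy)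
  have hfinal := hloc.apply_eq_of_preconnectedSpace
    (⟨1, by norm_num⟩ : Icc (0:ℝ) 1) (⟨0, by norm_num⟩ : Icc (0:ℝ) 1)
  simp only at hfinal
  rw [← hN1, ← hN0]
  exact hfinal
end
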